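/- arXiv:0806.0320 — 2 statements merged into one kernel-verified Lean document; each statement's English description precedes it below -/
import Mathlib

section
/- (Invariance of H_λ under the Gauss–Seidel operator) If h ∈ H_λ, i.e. h ≤ T_λ h componentwise, then T^GS_λ h ∈ H_λ, i.e. T^GS_λ h ≤ T_λ(T^GS_λ h) componentwise. Hence T^GS_λ(H_λ) ⊆ H_λ. -/
/-- The Markovian operator `T_λ` of the λ-stochastic shortest path problem:
`(T_λ h)(i) = min_{a ∈ A(i)} ( r(i,a) − λ + Σ_j p(i,a,j)·h(j) )`. -/
noncomputable def Tlam {n : ℕ} (A : Fin n → Finset ℕ) (hA : ∀ i, (A i).Nonempty)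
    (r : Fin n → ℕ → ℝ) (p : Fin n → ℕ → Fin n → ℝ) (lam : ℝ)
    (h : Fin n → ℝ) (i : Fin n) : ℝ :=
  (A i).inf' (hA i) (fun a => r i a - lam + ∑ j, p i a j * h j)
/-- The Gauss–Seidel operator `T^GS_λ`, defined recursively in increasing order of
the state index:
`(T^GS_λ h)(i) = min_{a ∈ A(i)} ( r(i,a) − λ + Σ_{j<i} p(i,a,j)·(T^GS_λ h)(j) + Σ_{j≥i} p(i,a,j)·h(j) )`. -/
noncomputable def TGS {n : ℕ} (A : Fin n → Finset ℕ) (hA : ∀ i, (A i).Nonempty)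
    (r : Fin n → ℕ → ℝ) (p : Fin n → ℕ → Fin n → ℝ) (lam : ℝ)
    (h : Fin n → ℝ) : Fin n → ℝ
  | i =>
    (A i).inf' (hA i) (fun a =>
      r i a - lam
        + ∑ j ∈ (Finset.univ.filter (fun j : Fin n => j < i)).attach,
            p i a j.1 * TGS A hA r p lam h j.1
        + ∑ j ∈ Finset.univ.filter (fun j : Fin n => i ≤ j), p i a j * h j)
  termination_by i => i.1
  decreasing_by
    exact (Finset.mem_filter.mp j.2).2

/-!
A Gauss–Seidel sweep at state `i` is one step of `T_λ` applied to the vector that already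
uses the updated values `g = T^GS_λ h` at the states `j < i` and the old values `h` elsewhere.
Since `T_λ` is monotone (the transition weights are nonnegative), `h ≤ T_λ h` gives `h ≤ g` by
induction on `i`; then that spliced vector lies below `g`, so `g i ≤ (T_λ g) i`.
-/

section GaussSeidel

variable {n : ℕ} (A : Fin n → Finset ℕ) (hA : ∀ i, (A i).Nonempty)
  (r : Fin n → ℕ → ℝ) (p : Fin n → ℕ → Fin n → ℝ) (lam : ℝ)

theorem Tlam_mono {i : Fin n} (hp0 : ∀ a ∈ A i, ∀ j, 0 ≤ p i a j) {u v : Fin n → ℝ}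
    (huv : u ≤ v) : Tlam A hA r p lam u i ≤ Tlam A hA r p lam v i :=
  Finset.le_inf' _ _ fun a ha => (Finset.inf'_le _ ha).trans <| by
    gcongr with j
    exacts [hp0 a ha j, huv j]

theorem TGS_apply (h : Fin n → ℝ) (i : Fin n) :
    TGS A hA r p lam h i =
      Tlam A hA r p lam ((Set.Iio i).piecewise (TGS A hA r p lam h) h) i := by
  rw [TGS, Tlam]
  congr 1
  funext a
  rw [Finset.sum_attach _ fun j => p i a j * TGS A hA r p lam h j, add_assoc]
  congr 1
  simp only [Set.piecewise, Set.mem_Iio, mul_ite, Finset.sum_ite, not_lt]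

theorem le_TGS (hp0 : ∀ i, ∀ a ∈ A i, ∀ j, 0 ≤ p i a j) {h : Fin n → ℝ}
    (hh : ∀ i, h i ≤ Tlam A hA r p lam h i) (i : Fin n) : h i ≤ TGS A hA r p lam h i := by
  induction i using WellFoundedLT.induction with
  | ind i ih =>
    calc h i ≤ Tlam A hA r p lam h i := hh i
      _ ≤ Tlam A hA r p lam ((Set.Iio i).piecewise (TGS A hA r p lam h) h) i :=
        Tlam_mono A hA r p lam (hp0 i) (Set.le_piecewise ih fun _ _ => le_rfl)
      _ = TGS A hA r p lam h i := (TGS_apply A hA r p lam h i).symm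

end GaussSeidel

theorem Hlam_invariant_under_TGS_general (n : ℕ)
    (A : Fin n → Finset ℕ) (hA : ∀ i, (A i).Nonempty)
    (r : Fin n → ℕ → ℝ) (p : Fin n → ℕ → Fin n → ℝ)
    (hp0 : ∀ i, ∀ a ∈ A i, ∀ j, 0 ≤ p i a j)
    (lam : ℝ) (h : Fin n → ℝ) (hh : ∀ i, h i ≤ Tlam A hA r p lam h i) :
    ∀ i, TGS A hA r p lam h i ≤ Tlam A hA r p lam (TGS A hA r p lam h) i := by
  intro i
  rw [TGS_apply]
  exact Tlam_mono A hA r p lam (hp0 i)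
    (Set.piecewise_le (fun _ _ => le_rfl) fun j _ => le_TGS A hA r p lam hp0 hh j)

/-- Invariance of `H_λ` under the Gauss–Seidel operator:
if `h ≤ T_λ h` componentwise, then `T^GS_λ h ≤ T_λ (T^GS_λ h)` componentwise. -/
theorem Hlam_invariant_under_TGS (n : ℕ) (hn : 1 ≤ n)
    (A : Fin n → Finset ℕ) (hA : ∀ i, (A i).Nonempty)
    (r : Fin n → ℕ → ℝ) (p : Fin n → ℕ → Fin n → ℝ)
    (hp0 : ∀ i, ∀ a ∈ A i, ∀ j, 0 ≤ p i a j)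
    (hp1 : ∀ i, ∀ a ∈ A i, ∑ j, p i a j ≤ 1)
    (lam : ℝ) (h : Fin n → ℝ) (hh : ∀ i, h i ≤ Tlam A hA r p lam h i) :
    ∀ i, TGS A hA r p lam h i ≤ Tlam A hA r p lam (TGS A hA r p lam h) i :=
  Hlam_invariant_under_TGS_general n A hA r p hp0 lam h hh
end

section
/- (Accelerated iterates are closer to the fixed point, Remark (iii)) Let Z : ℝ^n → ℝ^n satisfy (A) Z(V) ⊆ V and (B) Z v ≥ v componentwise for all v ∈ V. Suppose v* ∈ ℝ^n satisfies T v* = v*. Let v^0 = w^0 ∈ V and define v^{k+1} = T v^k and w^{k+1} = Z(T w^k) for k ≥ 0. Then for every k ≥ 0: ‖v* − w^k‖_∞ ≤ ‖v* − v^k‖_∞, where ‖·‖_∞ denotes the max norm on ℝ^n. -/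
/-!
The accelerated iterates stay among the subsolutions `u ≤ T u`: `T` is monotone, so it maps
subsolutions to subsolutions, and `Z` does so by assumption. Since `Z` only increases
subsolutions, monotonicity of `T` gives `v^k ≤ w^k` by induction. Every subsolution `u` lies below
the fixed point: if `c ≥ 0` is the largest excess of `u` over `v*`, then
`u ≤ T u ≤ T (v* + c) ≤ v* + α c`, so `c ≤ α c` and `c = 0`. Hence `0 ≤ v* - w^k ≤ v* - v^k`
componentwise, and the max norm is monotone on nonnegative vectors.
-/

/-- The Markovian operator of the discounted MDP:
`(T v)(i) = min_{a ∈ A(i)} ( r(i,a) + α·Σ_j p(i,a,j)·v(j) )`. -/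
noncomputable def Tdisc {n : ℕ} (A : Fin n → Finset ℕ) (hA : ∀ i, (A i).Nonempty)
    (r : Fin n → ℕ → ℝ) (p : Fin n → ℕ → Fin n → ℝ) (disc : ℝ)
    (v : Fin n → ℝ) (i : Fin n) : ℝ :=
  (A i).inf' (hA i) (fun a => r i a + disc * ∑ j, p i a j * v j)

section Subsolution

variable {α : Type*} [Preorder α] {T Z : α → α} {v w : ℕ → α}

theorem accelerated_iterate_le_map_and_le (hT : Monotone T)
    (hZA : ∀ u, u ≤ T u → Z u ≤ T (Z u)) (hZB : ∀ u, u ≤ T u → u ≤ Z u)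
    (h0 : v 0 = w 0) (hv : ∀ k, v (k + 1) = T (v k)) (hw : ∀ k, w (k + 1) = Z (T (w k)))
    (h0V : v 0 ≤ T (v 0)) : ∀ k, w k ≤ T (w k) ∧ v k ≤ w k
  | 0 => ⟨h0 ▸ h0V, h0.le⟩
  | k + 1 => by
    obtain ⟨hwV, hvw⟩ := accelerated_iterate_le_map_and_le hT hZA hZB h0 hv hw h0V k
    have hTwV : T (w k) ≤ T (T (w k)) := hT hwV
    rw [hv k, hw k]
    exact ⟨hZA _ hTwV, (hT hvw).trans (hZB _ hTwV)⟩

end Subsolution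

section MaxNorm

variable {ι : Type*} [Fintype ι]

theorem le_of_le_map_of_map_eq_self {T : (ι → ℝ) → ι → ℝ} {disc : ℝ} (hT : Monotone T)
    (hshift : ∀ u c, T (u + fun _ => c) ≤ T u + fun _ => disc * c)
    (hdisc0 : 0 ≤ disc) (hdisc1 : disc < 1) {vstar v : ι → ℝ} (hfix : T vstar = vstar)
    (hv : v ≤ T v) : v ≤ vstar := by
  set c := ‖fun i => max (v i - vstar i) 0‖
  have hc0 : 0 ≤ c := norm_nonneg _
  have hvc : ∀ i, v i - vstar i ≤ c := fun i => (le_max_left _ _).trans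
    ((Real.le_norm_self _).trans (norm_le_pi_norm (fun i => max (v i - vstar i) 0) i))
  have hv_disc : ∀ i, v i - vstar i ≤ disc * c := by
    intro i
    have := (hv.trans (hT fun j => show v j ≤ vstar j + c by linarith [hvc j])).trans
      (hshift vstar c) i
    simp only [Pi.add_apply, hfix] at this
    linarith
  have hc_le : c ≤ disc * c := by
    refine (pi_norm_le_iff_of_nonneg (by positivity)).2 fun i => ?_
    rw [Real.norm_of_nonneg (le_max_right _ _)]
    exact max_le (hv_disc i) (by positivity)
  intro i
  nlinarith [hv_disc i]

theorem norm_sub_le_norm_sub_of_le_of_le {u v w : ι → ℝ} (hvw : v ≤ w) (hwu : w ≤ u) :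
    ‖u - w‖ ≤ ‖u - v‖ := by
  refine (pi_norm_le_iff_of_nonneg (norm_nonneg _)).2 fun i => ?_
  refine le_trans ?_ (norm_le_pi_norm _ i)
  simp only [Pi.sub_apply, Real.norm_eq_abs]
  rw [abs_of_nonneg (sub_nonneg.2 (hwu i)), abs_of_nonneg (sub_nonneg.2 ((hvw i).trans (hwu i)))]
  linarith [hvw i]

end MaxNorm

section Tdisc

variable {n : ℕ} {A : Fin n → Finset ℕ} {hA : ∀ i, (A i).Nonempty}
  {r : Fin n → ℕ → ℝ} {p : Fin n → ℕ → Fin n → ℝ} {disc : ℝ}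

theorem Tdisc_mono (hdisc0 : 0 ≤ disc) (hp0 : ∀ i, ∀ a ∈ A i, ∀ j, 0 ≤ p i a j) :
    Monotone (Tdisc A hA r p disc) := by
  intro u v huv i
  refine Finset.le_inf' _ _ fun a ha => (Finset.inf'_le _ ha).trans ?_
  gcongr with j
  · exact hp0 i a ha j
  · exact huv j

theorem Tdisc_add_const_le (hp1 : ∀ i, ∀ a ∈ A i, ∑ j, p i a j = 1) (u : Fin n → ℝ) (c : ℝ) :
    Tdisc A hA r p disc (u + fun _ => c) ≤ Tdisc A hA r p disc u + fun _ => disc * c := by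
  intro i
  rw [Pi.add_apply, ← sub_le_iff_le_add]
  refine Finset.le_inf' _ _ fun a ha => ?_
  have hsum : ∑ j, p i a j * (u j + c) = ∑ j, p i a j * u j + c := by
    simp only [mul_add, Finset.sum_add_distrib, ← Finset.sum_mul, hp1 i a ha, one_mul]
  have hle : Tdisc A hA r p disc (u + fun _ => c) i ≤ r i a + disc * ∑ j, p i a j * (u j + c) :=
    Finset.inf'_le _ ha
  rw [hsum] at hle
  linarith

end Tdisc

theorem accelerated_VI_closer_general (n : ℕ)
    (disc : ℝ) (hdisc0 : 0 ≤ disc) (hdisc1 : disc < 1)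
    (A : Fin n → Finset ℕ) (hA : ∀ i, (A i).Nonempty)
    (r : Fin n → ℕ → ℝ) (p : Fin n → ℕ → Fin n → ℝ)
    (hp0 : ∀ i, ∀ a ∈ A i, ∀ j, 0 ≤ p i a j)
    (hp1 : ∀ i, ∀ a ∈ A i, ∑ j, p i a j = 1)
    (Z : (Fin n → ℝ) → (Fin n → ℝ))
    (hZA : ∀ v : Fin n → ℝ, (∀ i, v i ≤ Tdisc A hA r p disc v i) →
      ∀ i, Z v i ≤ Tdisc A hA r p disc (Z v) i)
    (hZB : ∀ v : Fin n → ℝ, (∀ i, v i ≤ Tdisc A hA r p disc v i) →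
      ∀ i, v i ≤ Z v i)
    (vstar : Fin n → ℝ) (hfix : Tdisc A hA r p disc vstar = vstar)
    (v w : ℕ → Fin n → ℝ)
    (h0 : v 0 = w 0) (h0V : ∀ i, v 0 i ≤ Tdisc A hA r p disc (v 0) i)
    (hv : ∀ k, v (k + 1) = Tdisc A hA r p disc (v k))
    (hw : ∀ k, w (k + 1) = Z (Tdisc A hA r p disc (w k))) :
    ∀ k, ‖vstar - w k‖ ≤ ‖vstar - v k‖ := by
  have hT := Tdisc_mono (A := A) (hA := hA) (r := r) hdisc0 hp0
  intro k
  obtain ⟨hwV, hvw⟩ := accelerated_iterate_le_map_and_le hT hZA hZB h0 hv hw h0V k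
  exact norm_sub_le_norm_sub_of_le_of_le hvw
    (le_of_le_map_of_map_eq_self hT (Tdisc_add_const_le hp1) hdisc0 hdisc1 hfix hwV)

/-- Accelerated iterates are closer to the fixed point in the max norm
(Remark, part (iii)): under the Acceleration Conditions, for every `k`,
`‖v* − w^k‖_∞ ≤ ‖v* − v^k‖_∞` (the norm on `Fin n → ℝ` is the sup/max norm). -/
theorem accelerated_VI_closer (n : ℕ) (hn : 1 ≤ n)
    (disc : ℝ) (hdisc0 : 0 ≤ disc) (hdisc1 : disc < 1)
    (A : Fin n → Finset ℕ) (hA : ∀ i, (A i).Nonempty)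
    (r : Fin n → ℕ → ℝ) (p : Fin n → ℕ → Fin n → ℝ)
    (hp0 : ∀ i, ∀ a ∈ A i, ∀ j, 0 ≤ p i a j)
    (hp1 : ∀ i, ∀ a ∈ A i, ∑ j, p i a j = 1)
    (Z : (Fin n → ℝ) → (Fin n → ℝ))
    (hZA : ∀ v : Fin n → ℝ, (∀ i, v i ≤ Tdisc A hA r p disc v i) →
      ∀ i, Z v i ≤ Tdisc A hA r p disc (Z v) i)
    (hZB : ∀ v : Fin n → ℝ, (∀ i, v i ≤ Tdisc A hA r p disc v i) →
      ∀ i, v i ≤ Z v i)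
    (vstar : Fin n → ℝ) (hfix : Tdisc A hA r p disc vstar = vstar)
    (v w : ℕ → Fin n → ℝ)
    (h0 : v 0 = w 0) (h0V : ∀ i, v 0 i ≤ Tdisc A hA r p disc (v 0) i)
    (hv : ∀ k, v (k + 1) = Tdisc A hA r p disc (v k))
    (hw : ∀ k, w (k + 1) = Z (Tdisc A hA r p disc (w k))) :
    ∀ k, ‖vstar - w k‖ ≤ ‖vstar - v k‖ :=
  accelerated_VI_closer_general n disc hdisc0 hdisc1 A hA r p hp0 hp1 Z hZA hZB vstar hfix v w h0
    h0V hv hw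
end
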